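/- arXiv:2605.19530 — 5 statements merged into one kernel-verified Lean document; each statement's English description precedes it below -/
import Mathlib

section
/- Let ρ = Σᵢ ξᵢξᵢ† (i = 1,…,k) be an n-qubit positive semidefinite matrix of rank k with ξ₁,…,ξ_k linearly independent. If the Lorentz invariant I_ρ = Tr(ρᵀ ε_n ρ ε_n) = 0, then k ≤ 2^{n-1}. -/
/-!
Write `E = epsPow n`. Expanding `ρ = ∑ ξᵢ ξᵢ†` gives `I_ρ = ∑ᵢⱼ conj(ξᵢᵀ Eᴴ ξⱼ) (ξᵢᵀ E ξⱼ)`, and since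
`Eᴴ = (-1)ⁿ E` this is `(-1)ⁿ ∑ᵢⱼ |ξᵢᵀ E ξⱼ|²`. So `I_ρ = 0` forces `ξᵢ ⬝ᵥ E ξⱼ = 0` for all `i, j`.
As `E² = (-1)ⁿ` is invertible, the `E ξⱼ` are again `k` independent vectors, all annihilated by the
rank-`k` map `v ↦ (ξᵢ ⬝ᵥ v)ᵢ`, hence `k + k ≤ 2ⁿ`.
-/

open Matrix

noncomputable def eps : Matrix (Fin 2) (Fin 2) ℂ := !![0, 1; -1, 0]

noncomputable def epsPow (n : ℕ) : Matrix (Fin n → Fin 2) (Fin n → Fin 2) ℂ :=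
  Matrix.of fun i j => ∏ k, eps (i k) (j k)

open Module

section PiKronecker

variable {κ α R : Type*} [Fintype κ]

def piKronecker [CommMonoid R] (A : κ → Matrix α α R) : Matrix (κ → α) (κ → α) R :=
  of fun i j => ∏ k, A k (i k) (j k)

lemma piKronecker_mul [CommSemiring R] [Fintype α] [DecidableEq κ] (A B : κ → Matrix α α R) :
    piKronecker A * piKronecker B = piKronecker fun k => A k * B k := by
  ext i j
  simp only [piKronecker, mul_apply, of_apply, ← Finset.prod_mul_distrib]
  exact (Fintype.prod_sum fun k c => A k (i k) c * B k c (j k)).symm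

lemma piKronecker_one [CommSemiring R] [DecidableEq α] :
    piKronecker (fun _ : κ => (1 : Matrix α α R)) = 1 := by
  ext i j
  simp [piKronecker, one_apply, Finset.prod_boole, funext_iff]

lemma piKronecker_neg [CommRing R] (A : κ → Matrix α α R) :
    piKronecker (fun k => -A k) = (-1 : R) ^ Fintype.card κ • piKronecker A := by
  ext i j
  simp [piKronecker, Finset.prod_neg]

lemma conjTranspose_piKronecker [CommSemiring R] [StarRing R] (A : κ → Matrix α α R) :
    (piKronecker A)ᴴ = piKronecker fun k => (A k)ᴴ := by
  ext i j
  simp [piKronecker, star_prod]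

end PiKronecker

lemma epsPow_eq_piKronecker (n : ℕ) : epsPow n = piKronecker fun _ => eps := rfl

lemma eps_mul_eps : eps * eps = -1 := by
  ext a b
  fin_cases a <;> fin_cases b <;> simp [eps]

lemma conjTranspose_eps : epsᴴ = -eps := by
  ext a b
  fin_cases a <;> fin_cases b <;> simp [eps]

lemma epsPow_mul_self (n : ℕ) : epsPow n * epsPow n = (-1 : ℂ) ^ n • 1 := by
  rw [epsPow_eq_piKronecker, piKronecker_mul, eps_mul_eps, piKronecker_neg, piKronecker_one,
    Fintype.card_fin]

lemma conjTranspose_epsPow (n : ℕ) : (epsPow n)ᴴ = (-1 : ℂ) ^ n • epsPow n := by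
  rw [epsPow_eq_piKronecker, conjTranspose_piKronecker, conjTranspose_eps, piKronecker_neg,
    Fintype.card_fin]

lemma epsPow_mulVec_injective (n : ℕ) : Function.Injective (epsPow n *ᵥ ·) := by
  refine Function.LeftInverse.injective (g := fun v => (-1 : ℂ) ^ n • epsPow n *ᵥ v) fun v => ?_
  simp only [mulVec_mulVec, epsPow_mul_self, smul_mulVec, one_mulVec, smul_smul, ← mul_pow,
    neg_one_mul, neg_neg, one_pow, one_smul]

section Trace

variable {ι κ : Type*} [Fintype ι] [Fintype κ]

lemma star_dotProduct_conjTranspose_mulVec (M : Matrix ι ι ℂ) (a b : ι → ℂ) :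
    star (a ⬝ᵥ Mᴴ *ᵥ b) = star b ⬝ᵥ M *ᵥ star a := by
  rw [dotProduct_mulVec, ← star_dotProduct_star, star_vecMul, conjTranspose_conjTranspose,
    dotProduct_comm]

lemma trace_vecMulVec_mul_vecMulVec_mul (M : Matrix ι ι ℂ) (a b : ι → ℂ) :
    (vecMulVec (star a) a * M * vecMulVec b (star b) * M).trace
      = star (a ⬝ᵥ Mᴴ *ᵥ b) * (a ⬝ᵥ M *ᵥ b) := by
  rw [star_dotProduct_conjTranspose_mulVec, vecMulVec_mul, vecMulVec_mul_vecMulVec,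
    vecMulVec_mul, smul_vecMul, trace_vecMulVec, dotProduct_smul, smul_eq_mul, mul_comm,
    dotProduct_mulVec, dotProduct_mulVec, dotProduct_comm (star a)]

lemma trace_transpose_mul_mul_mul (M : Matrix ι ι ℂ) (ξ : κ → ι → ℂ) :
    ((∑ i, vecMulVec (ξ i) (star (ξ i)))ᵀ * M * (∑ i, vecMulVec (ξ i) (star (ξ i))) * M).trace
      = ∑ i, ∑ j, star (ξ i ⬝ᵥ Mᴴ *ᵥ ξ j) * (ξ i ⬝ᵥ M *ᵥ ξ j) := by
  simp only [transpose_sum, transpose_vecMulVec, Finset.sum_mul, Finset.mul_sum, trace_sum,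
    trace_vecMulVec_mul_vecMulVec_mul]
  exact Finset.sum_comm

lemma dotProduct_mulVec_eq_zero_of_trace_eq_zero {M : Matrix ι ι ℂ} {s : ℂ} (hs : s ≠ 0)
    (hM : Mᴴ = s • M) {ξ : κ → ι → ℂ}
    (h : ((∑ i, vecMulVec (ξ i) (star (ξ i)))ᵀ * M * (∑ i, vecMulVec (ξ i) (star (ξ i))) *
      M).trace = 0) (i j : κ) :
    ξ i ⬝ᵥ M *ᵥ ξ j = 0 := by
  have hsq : ∑ i, ∑ j, ‖ξ i ⬝ᵥ M *ᵥ ξ j‖ ^ 2 = 0 := by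
    rw [trace_transpose_mul_mul_mul, hM] at h
    simp only [smul_mulVec, dotProduct_smul, smul_eq_mul, star_mul', mul_assoc, ← Finset.mul_sum,
      Complex.star_def, Complex.conj_mul'] at h
    exact_mod_cast (mul_eq_zero.mp h).resolve_left (by simpa using hs)
  rw [Fintype.sum_eq_zero_iff_of_nonneg fun _ => by positivity] at hsq
  have hi := congrFun hsq i
  rw [Pi.zero_apply, Fintype.sum_eq_zero_iff_of_nonneg fun _ => by positivity] at hi
  simpa using congrFun hi j

end Trace

lemma card_add_card_le_of_dotProduct_eq_zero {K ι κ μ : Type*} [Field K] [Fintype ι] [Fintype κ]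
    [Fintype μ] {u : κ → ι → K} {v : μ → ι → K} (hu : LinearIndependent K u)
    (hv : LinearIndependent K v) (h : ∀ i j, u i ⬝ᵥ v j = 0) :
    Fintype.card κ + Fintype.card μ ≤ Fintype.card ι := by
  have hker : Fintype.card μ ≤ finrank K (LinearMap.ker (of u).mulVecLin) := by
    rw [← finrank_span_eq_card hv]
    refine Submodule.finrank_mono (Submodule.span_le.mpr ?_)
    rintro _ ⟨j, rfl⟩
    ext i
    exact h i j
  have hrank := LinearMap.finrank_range_add_finrank_ker (of u).mulVecLin
  rw [← Matrix.rank, LinearIndependent.rank_matrix (M := of u) hu,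
    finrank_fintype_fun_eq_card] at hrank
  omega

theorem stmt5 (n k : ℕ) (ξ : Fin k → (Fin n → Fin 2) → ℂ)
    (hli : LinearIndependent ℂ ξ)
    (hI : (((∑ i, vecMulVec (ξ i) (star (ξ i)))ᵀ * epsPow n *
        (∑ i, vecMulVec (ξ i) (star (ξ i))) * epsPow n).trace) = 0) :
    k ≤ 2 ^ (n - 1) := by
  have horth : ∀ i j, ξ i ⬝ᵥ epsPow n *ᵥ ξ j = 0 :=
    dotProduct_mulVec_eq_zero_of_trace_eq_zero (pow_ne_zero n (neg_ne_zero.mpr one_ne_zero))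
      (conjTranspose_epsPow n) hI
  have hli' : LinearIndependent ℂ fun j => epsPow n *ᵥ ξ j :=
    hli.map' (epsPow n).mulVecLin (LinearMap.ker_eq_bot.mpr (epsPow_mulVec_injective n))
  have hcard := card_add_card_le_of_dotProduct_eq_zero hli hli' horth
  simp only [Fintype.card_fin, Fintype.card_pi, Finset.prod_const, Finset.card_univ] at hcard
  cases n with
  | zero => simp only [pow_zero] at hcard ⊢; omega
  | succ m => rw [pow_succ] at hcard; simp only [Nat.add_sub_cancel]; omega
end

section
/- Let ρ be the three-qubit state ρ = (1/4)(I₈ − Σⱼ ξⱼξⱼ†), where ξ₁ = e₀⊗e₀⊗e₀, ξ₂ = e₁⊗x₂⊗x₃, ξ₃ = x₁⊗e₁⊗x₃′, ξ₄ = x₁′⊗x₂′⊗e₁, with x_k = (cos θ_k, sin θ_k)ᵀ, x_k′ = (−sin θ_k, cos θ_k)ᵀ, θ_k ∈ (0, π/2). Then the Lorentz invariant of ρ equals I_ρ = −(1/4)(cos²θ₁ cos²θ₂ + sin²θ₁ cos²θ₃ + sin²θ₂ sin²θ₃). -/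
open Matrix Real

/-- ε₃ = ε ⊗ ε ⊗ ε on the index type Fin 2 × Fin 2 × Fin 2. -/
noncomputable def eps3 : Matrix (Fin 2 × Fin 2 × Fin 2) (Fin 2 × Fin 2 × Fin 2) ℂ :=
  Matrix.of fun i j => eps i.1 j.1 * eps i.2.1 j.2.1 * eps i.2.2 j.2.2

/-- Product vector u ⊗ v ⊗ w in ℂ² ⊗ ℂ² ⊗ ℂ². -/
def pvec (u v w : Fin 2 → ℂ) : Fin 2 × Fin 2 × Fin 2 → ℂ :=
  fun p => u p.1 * v p.2.1 * w p.2.2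

set_option maxHeartbeats 8000000 in
set_option maxRecDepth 100000 in
theorem stmt11 (θ1 θ2 θ3 : ℝ)
    (hθ1 : θ1 ∈ Set.Ioo 0 (π / 2)) (hθ2 : θ2 ∈ Set.Ioo 0 (π / 2))
    (hθ3 : θ3 ∈ Set.Ioo 0 (π / 2)) :
    let x1 : Fin 2 → ℂ := ![(cos θ1 : ℂ), (sin θ1 : ℂ)]
    let x2 : Fin 2 → ℂ := ![(cos θ2 : ℂ), (sin θ2 : ℂ)]
    let x3 : Fin 2 → ℂ := ![(cos θ3 : ℂ), (sin θ3 : ℂ)]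
    let x1' : Fin 2 → ℂ := ![(-sin θ1 : ℂ), (cos θ1 : ℂ)]
    let x2' : Fin 2 → ℂ := ![(-sin θ2 : ℂ), (cos θ2 : ℂ)]
    let x3' : Fin 2 → ℂ := ![(-sin θ3 : ℂ), (cos θ3 : ℂ)]
    let e0 : Fin 2 → ℂ := ![1, 0]
    let e1 : Fin 2 → ℂ := ![0, 1]
    let ξ : Fin 4 → Fin 2 × Fin 2 × Fin 2 → ℂ :=
      ![pvec e0 e0 e0, pvec e1 x2 x3, pvec x1 e1 x3', pvec x1' x2' e1]
    let ρ : Matrix (Fin 2 × Fin 2 × Fin 2) (Fin 2 × Fin 2 × Fin 2) ℂ :=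
      (4 : ℂ)⁻¹ • (1 - ∑ j, vecMulVec (ξ j) (star (ξ j)))
    (ρᵀ * eps3 * ρ * eps3).trace
      = -((1 : ℂ) / 4) * ((cos θ1 ^ 2 * cos θ2 ^ 2 + sin θ1 ^ 2 * cos θ3 ^ 2
          + sin θ2 ^ 2 * sin θ3 ^ 2 : ℝ) : ℂ) := by
  intro x1 x2 x3 x1' x2' x3' e0 e1 ξ ρ
  have h1 : (sin θ1:ℂ)^2 + (cos θ1:ℂ)^2 = 1 := by
    norm_cast; exact sin_sq_add_cos_sq θ1
  have h2 : (sin θ2:ℂ)^2 + (cos θ2:ℂ)^2 = 1 := by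
    norm_cast; exact sin_sq_add_cos_sq θ2
  have h3 : (sin θ3:ℂ)^2 + (cos θ3:ℂ)^2 = 1 := by
    norm_cast; exact sin_sq_add_cos_sq θ3
  simp only [ρ, ξ, x1, x2, x3, x1', x2', x3', e0, e1, pvec, eps3, eps,
    Matrix.trace, Matrix.diag, Matrix.mul_apply, Matrix.transpose_apply,
    Matrix.smul_apply, Matrix.sub_apply, Matrix.add_apply, Matrix.one_apply, Matrix.of_apply,
    Matrix.vecMulVec_apply, Pi.star_apply, star_mul', star_one, star_zero,
    star_neg, Complex.star_def, Complex.conj_ofReal, _root_.map_neg, _root_.map_one, _root_.map_zero, _root_.map_mul,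
    Fintype.sum_prod_type, Fin.sum_univ_two, Fin.sum_univ_four,
    Fin.isValue, Matrix.cons_val', Matrix.cons_val_zero, Matrix.cons_val_one,
    Matrix.head_cons, Matrix.tail_cons, Matrix.cons_val_two, Matrix.cons_val_three,
    Matrix.head_fin_const, Matrix.empty_val',
    Matrix.cons_val_fin_one, smul_eq_mul, Prod.mk.injEq, Fin.reduceEq, reduceCtorEq, and_self, and_true, true_and,
    and_false, false_and, if_true, if_false, ite_true, ite_false, reduceIte,
    mul_zero, zero_mul, mul_one, one_mul, neg_zero, neg_neg, add_zero, zero_add,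
    mul_neg, neg_mul, sub_zero, zero_sub]
  push_cast at h1 h2 h3 ⊢
  linear_combination ((1/8 : ℂ) * Complex.sin θ3^2 + (1/4 : ℂ) * Complex.cos θ3^2 + (1/8 : ℂ) * Complex.sin θ2^2 + (-1/8 : ℂ) * Complex.sin θ2^2 * Complex.sin θ3^2 + (-1/8 : ℂ) * Complex.sin θ2^4 * Complex.cos θ3^2 + (1/8 : ℂ) * Complex.cos θ2^2 + (-1/4 : ℂ) * Complex.cos θ2^2 * Complex.sin θ2^2 * Complex.cos θ3^2 + (-1/8 : ℂ) * Complex.cos θ2^4 * Complex.cos θ3^2 + (-1/8 : ℂ) * Complex.sin θ1^2 * Complex.sin θ2^2 * Complex.sin θ3^2 + (-1/8 : ℂ) * Complex.cos θ1^2 * Complex.sin θ2^2 * Complex.sin θ3^2) * h1 + ((1/8 : ℂ) + (1/8 : ℂ) * Complex.sin θ3^2 + (-1/8 : ℂ) * Complex.sin θ2^2 * Complex.cos θ3^2 + (-1/8 : ℂ) * Complex.cos θ2^2 * Complex.cos θ3^2 + (1/8 : ℂ) * Complex.cos θ1^2 * Complex.cos θ3^2 + (1/8 : ℂ) * Complex.cos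 θ1^2 * Complex.sin θ2^2 * Complex.cos θ3^2 + (1/8 : ℂ) * Complex.cos θ1^2 * Complex.cos θ2^2 * Complex.cos θ3^2) * h2 + ((1/4 : ℂ) + (-1/8 : ℂ) * Complex.cos θ1^2 * Complex.cos θ2^2 + (-1/8 : ℂ) * Complex.cos θ1^2 * Complex.cos θ2^2 * Complex.sin θ3^2 + (-1/8 : ℂ) * Complex.cos θ1^2 * Complex.cos θ2^2 * Complex.cos θ3^2) * h3
end

section
/- For θ₁, θ₂, θ₃ ∈ (0, π/2), the function f(θ₁,θ₂,θ₃) = cos²θ₁ cos²θ₂ + sin²θ₁ cos²θ₃ + sin²θ₂ sin²θ₃ takes values exactly in the open interval (0,1); i.e., 0 < f < 1 on the open cube, and both bounds are approached but not attained. -/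
open Real

lemma exists_sin_sq (a : ℝ) (ha : a ∈ Set.Ioo (0:ℝ) 1) :
    ∃ θ ∈ Set.Ioo 0 (π / 2), sin θ ^ 2 = a := by
  obtain ⟨ha0, ha1⟩ := ha
  refine ⟨arcsin (Real.sqrt a), ⟨?_, ?_⟩, ?_⟩
  · exact Real.arcsin_pos.2 (Real.sqrt_pos.2 ha0)
  · exact Real.arcsin_lt_pi_div_two.2 (by
      rw [show (1:ℝ) = Real.sqrt 1 by simp]
      exact Real.sqrt_lt_sqrt ha0.le ha1)
  · rw [Real.sin_arcsin (by linarith [Real.sqrt_nonneg a]) (by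
      rw [show (1:ℝ) = Real.sqrt 1 by simp]
      exact Real.sqrt_le_sqrt ha1.le)]
    exact Real.sq_sqrt ha0.le

theorem stmt12 :
    (fun θ : ℝ × ℝ × ℝ =>
        cos θ.1 ^ 2 * cos θ.2.1 ^ 2 + sin θ.1 ^ 2 * cos θ.2.2 ^ 2
          + sin θ.2.1 ^ 2 * sin θ.2.2 ^ 2) ''
      (Set.Ioo 0 (π / 2) ×ˢ Set.Ioo 0 (π / 2) ×ˢ Set.Ioo 0 (π / 2))
      = Set.Ioo 0 1 := by
  ext t
  constructor
  · rintro ⟨⟨θ1, θ2, θ3⟩, ⟨⟨h1a, h1b⟩, ⟨h2a, h2b⟩, ⟨h3a, h3b⟩⟩, rfl⟩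
    have hpi := Real.pi_pos
    have hc1 : 0 < cos θ1 := Real.cos_pos_of_mem_Ioo ⟨by linarith, h1b⟩
    have hc2 : 0 < cos θ2 := Real.cos_pos_of_mem_Ioo ⟨by linarith, h2b⟩
    have hc3 : 0 < cos θ3 := Real.cos_pos_of_mem_Ioo ⟨by linarith, h3b⟩
    have hs1 : 0 < sin θ1 := Real.sin_pos_of_pos_of_lt_pi h1a (by linarith)
    have hs2 : 0 < sin θ2 := Real.sin_pos_of_pos_of_lt_pi h2a (by linarith)
    have hs3 : 0 < sin θ3 := Real.sin_pos_of_pos_of_lt_pi h3a (by linarith)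
    have p1 := sin_sq_add_cos_sq θ1
    have p2 := sin_sq_add_cos_sq θ2
    have p3 := sin_sq_add_cos_sq θ3
    constructor
    · positivity
    · simp only
      rw [show cos θ1 ^ 2 = 1 - sin θ1 ^ 2 from by linarith,
        show cos θ2 ^ 2 = 1 - sin θ2 ^ 2 from by linarith,
        show cos θ3 ^ 2 = 1 - sin θ3 ^ 2 from by linarith]
      have h1 : 0 < 1 - sin θ1 ^ 2 := by nlinarith
      have h2 : 0 < 1 - sin θ2 ^ 2 := by nlinarith
      have h3 : 0 < 1 - sin θ3 ^ 2 := by nlinarith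
      nlinarith [mul_pos (mul_pos (mul_pos hs2 hs2) h1) h3,
        mul_pos (mul_pos (mul_pos hs1 hs1) (mul_pos hs3 hs3)) h2]
  · rintro ⟨ht0, ht1⟩
    -- find s ∈ (0,1) with 3s - 4s² + 2s³ = t
    have hg : Continuous fun s : ℝ => 3 * s - 4 * s ^ 2 + 2 * s ^ 3 := by continuity
    have hIVT := intermediate_value_Ioo (a := (0:ℝ)) (b := 1) zero_le_one
      hg.continuousOn (f := fun s : ℝ => 3 * s - 4 * s ^ 2 + 2 * s ^ 3)
    have hmem : t ∈ Set.Ioo ((fun s : ℝ => 3 * s - 4 * s ^ 2 + 2 * s ^ 3) 0)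
        ((fun s : ℝ => 3 * s - 4 * s ^ 2 + 2 * s ^ 3) 1) := by
      constructor <;> simp <;> linarith
    obtain ⟨s, ⟨hs0, hs1⟩, hgs⟩ := hIVT hmem
    simp only at hgs
    have hy : s * (1 - s) ∈ Set.Ioo (0:ℝ) 1 := by
      constructor
      · nlinarith
      · nlinarith
    obtain ⟨θ1, hθ1, e1⟩ := exists_sin_sq (1 - s) ⟨by linarith, by linarith⟩
    obtain ⟨θ2, hθ2, e2⟩ := exists_sin_sq (s * (1 - s)) hy
    obtain ⟨θ3, hθ3, e3⟩ := exists_sin_sq (1 - s) ⟨by linarith, by linarith⟩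
    refine ⟨(θ1, θ2, θ3), ⟨hθ1, hθ2, hθ3⟩, ?_⟩
    have c1 : cos θ1 ^ 2 = s := by
      have := sin_sq_add_cos_sq θ1; linarith
    have c2 : cos θ2 ^ 2 = 1 - s * (1 - s) := by
      have := sin_sq_add_cos_sq θ2; linarith
    have c3 : cos θ3 ^ 2 = s := by
      have := sin_sq_add_cos_sq θ3; linarith
    simp only [c1, c2, c3, e1, e2, e3]
    ring_nf
    ring_nf at hgs
    linarith
end

section
/- Let t ∈ ℂ with t ≠ 0 and t ≠ 1, and let K ⊂ ℂ⁸ be the set of vectors (a, −[(|t|²+t)c+(|t|²−t)d]/(2|t|²), −[(|t|²−t)c+(|t|²+t)d]/(2|t|²), −a, b, c, d, b) for (a,b,c,d) ∈ ℂ⁴. Then K contains no nonzero product vector u⊗v⊗w with u,v,w ∈ ℂ², i.e., K ∩ {u⊗v⊗w : u,v,w ∈ ℂ²} = {0}. -/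
open Matrix

theorem stmt13 (t : ℂ) (h0 : t ≠ 0) (h1 : t ≠ 1)
    (x : Fin 2 × Fin 2 × Fin 2 → ℂ)
    (hK : ∃ a b c d : ℂ, x = fun p =>
      (![![![a,
            -((((Complex.normSq t : ℂ) + t) * c + ((Complex.normSq t : ℂ) - t) * d)
              / (2 * (Complex.normSq t : ℂ)))],
          ![-((((Complex.normSq t : ℂ) - t) * c + ((Complex.normSq t : ℂ) + t) * d)
              / (2 * (Complex.normSq t : ℂ))),
            -a]],
        ![![b, c], ![d, b]]] : Fin 2 → Fin 2 → Fin 2 → ℂ) p.1 p.2.1 p.2.2)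
    (hprod : ∃ u v w : Fin 2 → ℂ, x = fun p => u p.1 * v p.2.1 * w p.2.2) :
    x = 0 := by
  obtain ⟨a, b, c, d, hx⟩ := hK
  obtain ⟨u, v, w, hp⟩ := hprod
  set n : ℂ := (Complex.normSq t : ℂ) with hnn
  have hn : n ≠ 0 := by
    simp only [hnn, ne_eq, Complex.ofReal_eq_zero, Complex.normSq_eq_zero]
    exact h0
  have htn : t ≠ n := by
    intro h
    have hc1 : t * 1 = t * (starRingEnd ℂ) t := by
      rw [Complex.mul_conj, mul_one, ← hnn, ← h]
    have : (1 : ℂ) = (starRingEnd ℂ) t := mul_left_cancel₀ h0 hc1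
    apply h1
    have := congrArg (starRingEnd ℂ) this
    simpa using this.symm
  have h8 : ∀ i j k : Fin 2,
      (![![![a, -((( n + t) * c + (n - t) * d) / (2 * n))],
          ![-(((n - t) * c + (n + t) * d) / (2 * n)), -a]],
        ![![b, c], ![d, b]]] : Fin 2 → Fin 2 → Fin 2 → ℂ) i j k
        = u i * v j * w k := fun i j k => congrFun (hx.symm.trans hp) (i, j, k)
  have E1 := h8 0 0 0
  have E2 := h8 0 0 1
  have E3 := h8 0 1 0
  have E4 := h8 0 1 1
  have E5 := h8 1 0 0
  have E6 := h8 1 0 1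
  have E7 := h8 1 1 0
  have E8 := h8 1 1 1
  simp only [Matrix.cons_val_zero, Matrix.cons_val_one, Matrix.head_cons,
    Matrix.head_fin_const] at E1 E2 E3 E4 E5 E6 E7 E8
  -- clear denominators in E2, E3
  have E2' : -((n + t) * c + (n - t) * d) = 2 * n * (u 0 * v 0 * w 1) := by
    field_simp at E2; linear_combination E2
  have E3' : -((n - t) * c + (n + t) * d) = 2 * n * (u 0 * v 1 * w 0) := by
    field_simp at E3; linear_combination E3
  -- key derived relations
  have hua : u 1 * a = 0 := by
    have h2 : (2 : ℂ) * (u 1 * a) = 0 := by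
      linear_combination u 1 * E1 - u 1 * E4 - u 0 * E5 + u 0 * E8
    simpa using mul_eq_zero.mp h2
  have hub : u 0 * b = 0 := by
    have h2 : (2 : ℂ) * (u 0 * b) = 0 := by
      linear_combination u 0 * E5 + u 0 * E8 - u 1 * E1 - u 1 * E4
    simpa using mul_eq_zero.mp h2
  have hbb : c * d = b * b := by
    linear_combination d * E6 + (u 1 * v 0 * w 1) * E7 - b * E5 - (u 1 * v 0 * w 0) * E8
  have hcd1 : (u 0 + u 1) * (c + d) = 0 := by
    have h2 : (2 * n) * ((u 0 + u 1) * (c + d)) = (2 * n) * 0 := by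
      linear_combination 2 * n * u 0 * E6 + 2 * n * u 0 * E7 - u 1 * E2' - u 1 * E3'
    exact mul_left_cancel₀ (by simp [hn]) h2
  have hcd2 : (n * u 0 + t * u 1) * (c - d) = 0 := by
    have h2 : (2 : ℂ) * ((n * u 0 + t * u 1) * (c - d)) = 2 * 0 := by
      linear_combination 2 * n * u 0 * E6 - 2 * n * u 0 * E7 - u 1 * E2' + u 1 * E3'
    exact mul_left_cancel₀ two_ne_zero h2
  -- a = 0
  have ha : a = 0 := by
    by_contra ha
    have hu1 : u 1 = 0 := by
      rcases mul_eq_zero.mp hua with h | h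
      · exact h
      · exact absurd h ha
    have hc : c = 0 := by rw [E6, hu1]; ring
    have hd : d = 0 := by rw [E7, hu1]; ring
    have h001 : u 0 * v 0 * w 1 = 0 := by
      rw [hc, hd] at E2'
      have h2 : 2 * n * (u 0 * v 0 * w 1) = 0 := by linear_combination -E2'
      rcases mul_eq_zero.mp h2 with h | h
      · exact absurd h (by simp [hn])
      · exact h
    have hprod0 : u 0 * v 0 * w 0 ≠ 0 := by rw [E1] at ha; exact ha
    have hw1 : w 1 = 0 := by
      rcases mul_eq_zero.mp h001 with h | h
      · exact absurd (by rw [h, zero_mul] : u 0 * v 0 * w 0 = 0) hprod0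
      · exact h
    rw [hw1] at E4
    exact ha (by linear_combination -E4)
  -- c = 0 and d = 0
  have hu1ne : c ≠ 0 ∨ d ≠ 0 → u 1 ≠ 0 := by
    intro h hc
    rw [hc] at E6 E7
    rcases h with h | h
    · exact h (by rw [E6]; ring)
    · exact h (by rw [E7]; ring)
  have hcd : c = 0 ∧ d = 0 := by
    by_cases hS : c + d = 0
    · by_cases hD : c - d = 0
      · constructor
        · linear_combination (hS + hD) / 2
        · linear_combination (hS - hD) / 2
      · -- d = -c, c ≠ 0; b^2 = -c^2 ≠ 0, so b ≠ 0, so u0 = 0; then t*u1 = 0, u1=0, contra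
        exfalso
        have hc0 : c ≠ 0 := fun h => hD (by rw [h] at hS ⊢; linear_combination -hS)
        have hb0 : b ≠ 0 := by
          intro h
          rw [h] at hbb
          have : c * c = 0 := by linear_combination -hbb + c * hS
          exact hc0 (by simpa using mul_eq_zero.mp this)
        have hu0 : u 0 = 0 := by
          rcases mul_eq_zero.mp hub with h | h
          · exact h
          · exact absurd h hb0
        have h2 : (n * u 0 + t * u 1) = 0 := by
          rcases mul_eq_zero.mp hcd2 with h | h
          · exact h
          · exact absurd h hD
        rw [hu0, mul_zero, zero_add] at h2
        rcases mul_eq_zero.mp h2 with h | h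
        · exact h0 h
        · exact hu1ne (Or.inl hc0) h
    · -- c + d ≠ 0: u0 + u1 = 0
      exfalso
      have hsum : u 0 + u 1 = 0 := by
        rcases mul_eq_zero.mp hcd1 with h | h
        · exact h
        · exact absurd h hS
      by_cases hD : c - d = 0
      · -- c = d ≠ 0; b^2 = c^2 ≠ 0, b ≠ 0, u0 = 0, then u1 = 0, contra
        have hc0 : c ≠ 0 := fun h => hS (by rw [h] at hD ⊢; linear_combination -hD)
        have hb0 : b ≠ 0 := by
          intro h
          rw [h] at hbb
          have : c * c = 0 := by linear_combination hbb + c * hD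
          exact hc0 (by simpa using mul_eq_zero.mp this)
        have hu0 : u 0 = 0 := by
          rcases mul_eq_zero.mp hub with h | h
          · exact h
          · exact absurd h hb0
        have hu1 : u 1 = 0 := by rw [hu0, zero_add] at hsum; exact hsum
        exact hu1ne (Or.inl hc0) hu1
      · -- both ≠ 0 : n u0 + t u1 = 0 and u0 = -u1 ⇒ (t - n) u1 = 0 ⇒ u1 = 0 contra
        have h2 : (n * u 0 + t * u 1) = 0 := by
          rcases mul_eq_zero.mp hcd2 with h | h
          · exact h
          · exact absurd h hD
        have h3 : (t - n) * u 1 = 0 := by linear_combination h2 - n * hsum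
        rcases mul_eq_zero.mp h3 with h | h
        · exact htn (by linear_combination h)
        · have hc0 : c ≠ 0 ∨ d ≠ 0 := by
            by_cases hc : c = 0
            · exact Or.inr (fun hd => hS (by rw [hc, hd, add_zero]))
            · exact Or.inl hc
          exact hu1ne hc0 h
  obtain ⟨hc, hd⟩ := hcd
  have hb : b = 0 := by
    rw [hc, hd] at hbb
    have hbb2 : b * b = 0 := by linear_combination -hbb
    simpa using mul_eq_zero.mp hbb2
  funext p
  obtain ⟨i, j, k⟩ := p
  rw [hx]
  fin_cases i <;> fin_cases j <;> fin_cases k <;>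
    simp [ha, hb, hc, hd]
end

section
/- Let t ∈ ℂ \ {0,1}, a₁=(1,0)ᵀ, a₂=(0,1)ᵀ, a₃=(1,1)ᵀ, a₄=(t,1)ᵀ ∈ ℂ², and φ₁=(1,0,0,1)ᵀ, φ₂=(1,0,0,−1)ᵀ, φ₃=(0,1,1,0)ᵀ, φ₄=(0,1,−1,0)ᵀ ∈ ℂ⁴. Set eᵢ = aᵢ⊗φᵢ ∈ ℂ⁸ and ρ = |t²−t|·e₁e₁† + |t−1|·e₂e₂† + |t|·e₃e₃† + e₄e₄†. Then the partial transpose ρ^{T₂} of ρ on the second qubit is positive semidefinite. -/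
/-!
Partially transposing the first factor of a Bell projector `φᵢφᵢ†` gives `1 - φⱼφⱼ†` for the
opposite Bell vector (`φ₁ ↔ φ₄`, `φ₂ ↔ φ₃`), and the four Bell projectors sum to `2`. Hence
`ρ^{T₂} = Σᵢ Mᵢ ⊗ φⱼφⱼ†` with `Mᵢ = ½ Σₖ λₖ aₖaₖ† - λᵢ aᵢaᵢ†`. Each `Mᵢ` is a Hermitian `2 × 2`
matrix whose diagonal is nonnegative by the triangle inequalities between `|t|`, `|t - 1|` and `1`,
and whose determinant vanishes because `|t² - t| = |t| |t - 1|`; so every `Mᵢ` is PSD.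
-/

open Matrix
open scoped ComplexOrder

/-- The four vectors (1,0), (0,1), (1,1), (t,1). -/
def avecs (t : ℂ) : Fin 4 → Fin 2 → ℂ := ![![1, 0], ![0, 1], ![1, 1], ![t, 1]]

/-- The four (unnormalized) Bell vectors in ℂ² ⊗ ℂ². -/
noncomputable def phiv : Fin 4 → Fin 2 × Fin 2 → ℂ :=
  fun j p => (![!![1, 0; 0, 1], !![1, 0; 0, -1], !![0, 1; 1, 0], !![0, 1; -1, 0]] j) p.1 p.2

/-- The bipartite product vectors eᵢ = aᵢ ⊗ φᵢ in ℂ² ⊗ (ℂ² ⊗ ℂ²). -/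
noncomputable def evec (t : ℂ) (i : Fin 4) : Fin 2 × Fin 2 × Fin 2 → ℂ :=
  fun p => avecs t i p.1 * phiv i p.2

/-- The weights λ₁ = |t²−t|, λ₂ = |t−1|, λ₃ = |t|, λ₄ = 1. -/
noncomputable def lam (t : ℂ) : Fin 4 → ℂ :=
  ![((‖t ^ 2 - t‖ : ℝ) : ℂ), ((‖t - 1‖ : ℝ) : ℂ), ((‖t‖ : ℝ) : ℂ), 1]

/-- The type-II state ρ(t) = Σ λᵢ eᵢeᵢ†. -/
noncomputable def rhoT (t : ℂ) : Matrix (Fin 2 × Fin 2 × Fin 2) (Fin 2 × Fin 2 × Fin 2) ℂ :=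
  ∑ i, lam t i • vecMulVec (evec t i) (star (evec t i))

/-- Partial transpose on the second qubit. -/
noncomputable def ptB (M : Matrix (Fin 2 × Fin 2 × Fin 2) (Fin 2 × Fin 2 × Fin 2) ℂ) :
    Matrix (Fin 2 × Fin 2 × Fin 2) (Fin 2 × Fin 2 × Fin 2) ℂ :=
  Matrix.of fun i j => M (i.1, j.2.1, i.2.2) (j.1, i.2.1, j.2.2)

open scoped Kronecker

theorem posSemidef_fin_two_of_normSq_le {a d : ℝ} {b : ℂ} (ha : 0 ≤ a) (hd : 0 ≤ d)
    (hb : Complex.normSq b ≤ a * d) :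
    (!![(a : ℂ), b; star b, (d : ℂ)]).PosSemidef := by
  obtain rfl | ha := ha.eq_or_lt
  · obtain rfl : b = 0 := Complex.normSq_eq_zero.mp (by nlinarith [Complex.normSq_nonneg b])
    have : !![((0 : ℝ) : ℂ), 0; star 0, (d : ℂ)] = diagonal ![0, (d : ℂ)] := by
      ext i j; fin_cases i <;> fin_cases j <;> simp
    rw [this]
    refine PosSemidef.diagonal fun i => ?_
    fin_cases i <;> simp [hd]
  · set u : Fin 2 → ℂ := ![(√a : ℂ), star b / √a]
    have hsa : (√a : ℂ) ≠ 0 := by simp [Real.sqrt_eq_zero', not_le.mpr ha]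
    have hsq : (√a : ℂ) * √a = a := by rw [← Complex.ofReal_mul, Real.mul_self_sqrt ha.le]
    have : !![(a : ℂ), b; star b, (d : ℂ)] =
        vecMulVec u (star u) + diagonal ![0, ((d - Complex.normSq b / a : ℝ) : ℂ)] := by
      ext i j; rw [Matrix.add_apply, vecMulVec_apply]; fin_cases i <;> fin_cases j <;> simp [u]
      · exact hsq.symm
      · exact (mul_div_cancel₀ b hsa).symm
      · exact (div_mul_cancel₀ _ hsa).symm
      · rw [div_mul_div_comm, hsq, ← Complex.normSq_eq_conj_mul_self]
        ring
    rw [this]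
    refine (posSemidef_vecMulVec_self_star u).add (PosSemidef.diagonal fun i => ?_)
    fin_cases i
    · simp
    · simp only [Fin.mk_one, Matrix.cons_val_one, Matrix.cons_val_zero, Pi.zero_apply]
      exact_mod_cast sub_nonneg.mpr ((div_le_iff₀ ha).mpr (by linarith))

namespace Matrix

variable {α l m n p : Type*}

def partialTransposeFst (M : Matrix (m × n) (m × n) α) : Matrix (m × n) (m × n) α :=
  of fun i j => M (j.1, i.2) (i.1, j.2)

theorem vecMulVec_tmul_self_star [CommSemiring α] [StarRing α] (u : m → α) (v : n → α) :
    vecMulVec (fun p => u p.1 * v p.2) (star fun p => u p.1 * v p.2) =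
      vecMulVec u (star u) ⊗ₖ vecMulVec v (star v) := by
  ext ⟨i, k⟩ ⟨j, l⟩
  simp only [vecMulVec_apply, kroneckerMap_apply, Pi.star_apply, star_mul']
  ring

theorem sub_kronecker [Ring α] (A A' : Matrix l m α) (B : Matrix n p α) :
    (A - A') ⊗ₖ B = A ⊗ₖ B - A' ⊗ₖ B := by
  ext ⟨i, k⟩ ⟨j, l⟩
  simp [sub_mul]

theorem kronecker_sub [Ring α] (A : Matrix l m α) (B B' : Matrix n p α) :
    A ⊗ₖ (B - B') = A ⊗ₖ B - A ⊗ₖ B' := by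
  ext ⟨i, k⟩ ⟨j, l⟩
  simp [mul_sub]

theorem sum_kronecker [Semiring α] {ι : Type*} (s : Finset ι) (A : ι → Matrix l m α)
    (B : Matrix n p α) : (∑ i ∈ s, A i) ⊗ₖ B = ∑ i ∈ s, A i ⊗ₖ B := by
  ext ⟨i, k⟩ ⟨j, l⟩
  simp [sum_apply, Finset.sum_mul]

theorem kronecker_sum [Semiring α] {ι : Type*} (s : Finset ι) (A : Matrix l m α)
    (B : ι → Matrix n p α) : A ⊗ₖ (∑ i ∈ s, B i) = ∑ i ∈ s, A ⊗ₖ B i := by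
  ext ⟨i, k⟩ ⟨j, l⟩
  simp [sum_apply, Finset.mul_sum]

end Matrix

theorem ptB_kronecker (A : Matrix (Fin 2) (Fin 2) ℂ) (B : Matrix (Fin 2 × Fin 2) (Fin 2 × Fin 2) ℂ) :
    ptB (A ⊗ₖ B) = A ⊗ₖ partialTransposeFst B :=
  rfl

theorem ptB_sum_smul {ι : Type*} (s : Finset ι) (c : ι → ℂ)
    (M : ι → Matrix (Fin 2 × Fin 2 × Fin 2) (Fin 2 × Fin 2 × Fin 2) ℂ) :
    ptB (∑ i ∈ s, c i • M i) = ∑ i ∈ s, c i • ptB (M i) := by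
  ext
  simp [ptB, Matrix.sum_apply]

theorem partialTransposeFst_phiv (i : Fin 4) :
    partialTransposeFst (vecMulVec (phiv i) (star (phiv i))) =
      1 - vecMulVec (phiv i.rev) (star (phiv i.rev)) := by
  ext ⟨a, b⟩ ⟨c, d⟩
  fin_cases i <;> fin_cases a <;> fin_cases b <;> fin_cases c <;> fin_cases d <;>
    simp [partialTransposeFst, phiv, vecMulVec_apply, one_apply, Fin.rev]

theorem sum_phiv_self_star : ∑ i, vecMulVec (phiv i) (star (phiv i)) = (2 : ℂ) • 1 := by
  ext ⟨a, b⟩ ⟨c, d⟩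
  fin_cases a <;> fin_cases b <;> fin_cases c <;> fin_cases d <;>
    simp [phiv, vecMulVec_apply, one_apply, Fin.sum_univ_four] <;> norm_num

noncomputable def frameOp (t : ℂ) : Matrix (Fin 2) (Fin 2) ℂ :=
  ∑ i, lam t i • vecMulVec (avecs t i) (star (avecs t i))

noncomputable def bellBlock (t : ℂ) (i : Fin 4) : Matrix (Fin 2) (Fin 2) ℂ :=
  (1 / 2 : ℂ) • frameOp t - lam t i • vecMulVec (avecs t i) (star (avecs t i))

theorem rhoT_eq_sum_kronecker (t : ℂ) :
    rhoT t = ∑ i, lam t i •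
      (vecMulVec (avecs t i) (star (avecs t i)) ⊗ₖ vecMulVec (phiv i) (star (phiv i))) :=
  Finset.sum_congr rfl fun i _ => by rw [← vecMulVec_tmul_self_star]; rfl

theorem ptB_rhoT_eq_sum_bellBlock (t : ℂ) :
    ptB (rhoT t) = ∑ i, bellBlock t i ⊗ₖ vecMulVec (phiv i.rev) (star (phiv i.rev)) := by
  have hrev : ∑ i : Fin 4, vecMulVec (phiv i.rev) (star (phiv i.rev)) = (2 : ℂ) • 1 := by
    rw [← sum_phiv_self_star]
    exact Fintype.sum_equiv Fin.revPerm _ _ fun _ => rfl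
  calc ptB (rhoT t)
      = ∑ i, lam t i • (vecMulVec (avecs t i) (star (avecs t i)) ⊗ₖ
          (1 - vecMulVec (phiv i.rev) (star (phiv i.rev)))) := by
        simp only [rhoT_eq_sum_kronecker, ptB_sum_smul, ptB_kronecker, partialTransposeFst_phiv]
    _ = frameOp t ⊗ₖ 1 - ∑ i, lam t i • (vecMulVec (avecs t i) (star (avecs t i)) ⊗ₖ
          vecMulVec (phiv i.rev) (star (phiv i.rev))) := by
        simp only [kronecker_sub, smul_sub, Finset.sum_sub_distrib, frameOp, sum_kronecker,
          smul_kronecker]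
    _ = ∑ i, bellBlock t i ⊗ₖ vecMulVec (phiv i.rev) (star (phiv i.rev)) := by
        simp only [bellBlock, sub_kronecker, Finset.sum_sub_distrib]
        rw [← kronecker_sum, hrev]
        simp only [kronecker_smul, smul_kronecker, smul_smul]
        norm_num

theorem bellBlock_apply (t : ℂ) (i : Fin 4) (a b : Fin 2) :
    bellBlock t i a b = (1 / 2) * ∑ j, lam t j * (avecs t j a * star (avecs t j b)) -
      lam t i * (avecs t i a * star (avecs t i b)) := by
  simp [bellBlock, frameOp, Matrix.sum_apply, vecMulVec_apply]

theorem bellBlock_posSemidef (t : ℂ) (i : Fin 4) : (bellBlock t i).PosSemidef := by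
  have hrs : ‖t ^ 2 - t‖ = ‖t‖ * ‖t - 1‖ := by rw [← norm_mul]; ring_nf
  have hr2 : ‖t‖ ^ 2 = t.re ^ 2 + t.im ^ 2 := by
    rw [← Complex.normSq_eq_norm_sq, Complex.normSq_apply]; ring
  have hs2 : ‖t - 1‖ ^ 2 = (t.re - 1) ^ 2 + t.im ^ 2 := by
    rw [← Complex.normSq_eq_norm_sq, Complex.normSq_apply]
    simp only [Complex.sub_re, Complex.one_re, Complex.sub_im, Complex.one_im, sub_zero]
    ring
  have hr : 0 ≤ ‖t‖ := norm_nonneg t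
  have htri₁ : |‖t‖ - ‖t - 1‖| ≤ 1 := by simpa using abs_norm_sub_norm_le t (t - 1)
  have htri₂ : 1 ≤ ‖t‖ + ‖t - 1‖ := by simpa using norm_sub_le t (t - 1)
  rw [abs_le] at htri₁
  fin_cases i <;> [
    convert posSemidef_fin_two_of_normSq_le (a := ‖t‖ * (1 + ‖t‖ - ‖t - 1‖) / 2)
      (d := (‖t‖ + 1 + ‖t - 1‖) / 2) (b := (‖t‖ + t) / 2) (by nlinarith) (by linarith)
      (by simp [Complex.normSq_apply]; nlinarith) using 1;
    convert posSemidef_fin_two_of_normSq_le (a := ‖t‖ * (1 + ‖t‖ + ‖t - 1‖) / 2)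
      (d := (‖t‖ + 1 - ‖t - 1‖) / 2) (b := (‖t‖ + t) / 2) (by positivity) (by linarith)
      (by simp [Complex.normSq_apply]; nlinarith) using 1;
    convert posSemidef_fin_two_of_normSq_le (a := ‖t‖ * (‖t‖ + ‖t - 1‖ - 1) / 2)
      (d := (1 + ‖t - 1‖ - ‖t‖) / 2) (b := (t - ‖t‖) / 2) (by nlinarith) (by linarith)
      (by simp [Complex.normSq_apply]; nlinarith) using 1;
    convert posSemidef_fin_two_of_normSq_le (a := ‖t‖ * (1 + ‖t - 1‖ - ‖t‖) / 2)
      (d := (‖t‖ + ‖t - 1‖ - 1) / 2) (b := (‖t‖ - t) / 2) (by nlinarith) (by linarith)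
      (by simp [Complex.normSq_apply]; nlinarith) using 1] <;>
  · ext a b
    fin_cases a <;> fin_cases b <;>
      simp [bellBlock_apply, lam, avecs, Fin.sum_univ_four, hrs, Complex.mul_conj,
        Complex.normSq_eq_norm_sq] <;> ring

theorem stmt16_general (t : ℂ) :
    (ptB (rhoT t)).PosSemidef := by
  rw [ptB_rhoT_eq_sum_bellBlock]
  exact posSemidef_sum _ fun i _ =>
    (bellBlock_posSemidef t i).kronecker (posSemidef_vecMulVec_self_star _)

theorem stmt16 (t : ℂ) (h0 : t ≠ 0) (h1 : t ≠ 1) :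
    (ptB (rhoT t)).PosSemidef :=
  stmt16_general t
end
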